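/- arXiv:2505.14123 — 4 statements merged into one kernel-verified Lean document; each statement's English description precedes it below -/
import Mathlib

section
/- Let F : C ⥤ D and G : D ⥤ C be functors with an adjunction F ⊣ G, and let W_C, W_D be classes of morphisms of C and D respectively such that: F maps every morphism of W_C into W_D, G maps every morphism of W_D into W_C, every component of the unit id_C ⟶ F ⋙ G lies in W_C, and every component of the counit G ⋙ F ⟶ id_D lies in W_D. Let L_D : D ⥤ D[W_D⁻¹] be a localization of D at W_D. Then the composite F ⋙ L_D : C ⥤ D[W_D⁻¹] is a localization of C at W_C (i.e., it satisfies the universal property of the localization of C at W_C). -/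
open CategoryTheory

lemma isIso_natTrans_of_essSurj {C : Type*} [Category C] {D : Type*} [Category D]
    {E : Type*} [Category E] (L : C ⥤ D) [L.EssSurj] {F₁ F₂ : D ⥤ E} (α : F₁ ⟶ F₂)
    (h : ∀ X : C, IsIso (α.app (L.obj X))) : IsIso α := by
  have : ∀ Y : D, IsIso (α.app Y) := by
    intro Y
    let e := L.objObjPreimageIso Y
    have : α.app Y = F₁.map e.inv ≫ α.app (L.obj _) ≫ F₂.map e.hom := by
      rw [← Category.assoc, α.naturality e.inv, Category.assoc, ← F₂.map_comp,
        Iso.inv_hom_id, F₂.map_id, Category.comp_id]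
    rw [this]
    have := h (L.objPreimage Y)
    infer_instance
  exact NatIso.isIso_of_isIso_app α

universe v₁ v₂ v₃ u₁ u₂ u₃

/-- Given an adjunction `F ⊣ G` with `F` preserving `W_C`, `G` preserving `W_D`,
unit components in `W_C` and counit components in `W_D`, the composite of `F` with
a localization of `D` at `W_D` is a localization of `C` at `W_C`. -/
theorem isLocalization_comp_of_adjunction
    {C : Type u₁} [Category.{v₁} C] {D : Type u₂} [Category.{v₂} D]
    (F : C ⥤ D) (G : D ⥤ C) (adj : F ⊣ G)
    (WC : MorphismProperty C) (WD : MorphismProperty D)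
    (hF : ∀ ⦃X Y : C⦄ (f : X ⟶ Y), WC f → WD (F.map f))
    (hG : ∀ ⦃X Y : D⦄ (f : X ⟶ Y), WD f → WC (G.map f))
    (hunit : ∀ X : C, WC (adj.unit.app X))
    (hcounit : ∀ Y : D, WD (adj.counit.app Y))
    {E : Type u₃} [Category.{v₃} E] (L : D ⥤ E) [L.IsLocalization WD] :
    (F ⋙ L).IsLocalization WC := by
  let Φ : LocalizerMorphism WC WD := ⟨F, fun X Y f hf => hF f hf⟩
  let Ψ : LocalizerMorphism WD WC := ⟨G, fun X Y f hf => hG f hf⟩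
  let F' := Φ.localizedFunctor WC.Q WD.Q
  let G' := Ψ.localizedFunctor WD.Q WC.Q
  have sq₁ : CatCommSq F WC.Q WD.Q F' := Φ.catCommSq WC.Q WD.Q
  have sq₂ : CatCommSq G WD.Q WC.Q G' := Ψ.catCommSq WD.Q WC.Q
  let adj' : F' ⊣ G' := adj.localization WC.Q WC WD.Q WD F' G'
  have hu : ∀ Z, IsIso (adj'.unit.app Z) := by
    have : IsIso adj'.unit := by
      have := Localization.essSurj WC.Q WC
      apply isIso_natTrans_of_essSurj WC.Q
      intro X
      rw [Adjunction.localization_unit_app]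
      have : IsIso (WC.Q.map (adj.unit.app X)) :=
        Localization.inverts WC.Q WC _ (hunit X)
      infer_instance
    intro Z
    infer_instance
  have hc : ∀ Z, IsIso (adj'.counit.app Z) := by
    have : IsIso adj'.counit := by
      have := Localization.essSurj WD.Q WD
      apply isIso_natTrans_of_essSurj WD.Q
      intro Y
      rw [Adjunction.localization_counit_app]
      have : IsIso (WD.Q.map (adj.counit.app Y)) :=
        Localization.inverts WD.Q WD _ (hcounit Y)
      infer_instance
    intro Z
    infer_instance
  have : F'.IsEquivalence := adj'.toEquivalence.isEquivalence_functor
  have : Φ.IsLocalizedEquivalence :=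
    LocalizerMorphism.IsLocalizedEquivalence.mk' Φ WC.Q WD.Q F'
  exact LocalizerMorphism.IsLocalizedEquivalence.isLocalization Φ L
end

section
/- Let C be a category, W a class of morphisms of C that contains all identities and is stable under composition, and n a natural number. Let Wₙ(C) be the full subcategory of Fun([n], C) on functors sending every morphism of [n] to W, let ptWₙ be the class of natural transformations between such functors all of whose components lie in W, and let Q : C ⥤ C[W⁻¹] be a localization of C at W. Let Isoₙ(C[W⁻¹]) denote the full subcategory of Fun([n], C[W⁻¹]) on functors sending every morphism of [n] to an isomorphism. Then the functor γₙ : Wₙ(C) ⥤ Isoₙ(C[W⁻¹]) given by postcomposition with Q is a localization of Wₙ(C) at ptWₙ. -/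
open CategoryTheory

universe v v' u u'

variable {C : Type u} [Category.{v} C]

/-- `Wₙ(C)`: the full subcategory of `Fun([n], C)` on functors sending every
morphism of `[n] = {0 < 1 < ... < n}` to a morphism in `W`. -/
abbrev WChain (W : MorphismProperty C) (n : ℕ) : Type _ :=
  ObjectProperty.FullSubcategory (fun F : Fin (n + 1) ⥤ C =>
    ∀ (i j : Fin (n + 1)) (f : i ⟶ j), W (F.map f))

/-- `ptWₙ`: the class of natural transformations between objects of `Wₙ(C)`
all of whose components lie in `W`. -/
def ptW (W : MorphismProperty C) (n : ℕ) : MorphismProperty (WChain W n) :=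
  fun _ _ τ => ∀ i : Fin (n + 1), W (NatTrans.app τ.hom i)

/-- `Isoₙ(D)`: the full subcategory of `Fun([n], D)` on functors sending every
morphism of `[n]` to an isomorphism. -/
abbrev IsoChain (D : Type u') [Category.{v'} D] (n : ℕ) : Type _ :=
  ObjectProperty.FullSubcategory (fun F : Fin (n + 1) ⥤ D =>
    ∀ (i j : Fin (n + 1)) (f : i ⟶ j), IsIso (F.map f))

/-- The functor `γₙ : Wₙ(C) ⥤ Isoₙ(C[W⁻¹])` given by postcomposition with the
localization functor `Q`. -/
def gammaN (W : MorphismProperty C) (n : ℕ)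
    {E : Type u'} [Category.{v'} E] (Q : C ⥤ E) [Q.IsLocalization W] :
    WChain W n ⥤ IsoChain E n where
  obj F := ⟨F.obj ⋙ Q, fun i j f => Localization.inverts Q W _ (F.property i j f)⟩
  map τ := ObjectProperty.homMk (Functor.whiskerRight τ.hom Q)
  map_id _ := by ext1; exact Functor.whiskerRight_id _
  map_comp f g := by ext1; exact Functor.whiskerRight_comp f.hom g.hom Q

lemma fullSubcategory_preimage_hom {P : ObjectProperty C} {X Y : P.FullSubcategory}
    (f : X.obj ⟶ Y.obj) : ((ObjectProperty.ι P).preimage f).hom = f :=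
  (ObjectProperty.ι P).map_preimage f

section Aux

variable {D : Type u'} [Category.{v'} D]

/-- The canonical natural transformation from the constant chain at `F(0)` to `F`. -/
@[simps]
def chainHom {n : ℕ} (F : Fin (n + 1) ⥤ D) : (Functor.const (Fin (n + 1))).obj (F.obj 0) ⟶ F where
  app i := F.map (homOfLE (Fin.zero_le i))
  naturality i j f := by
    dsimp
    rw [Category.id_comp, ← F.map_comp]
    congr 1

/-- Evaluation at `0` on `Wₙ(C)`. -/
def evWChain (W : MorphismProperty C) (n : ℕ) : WChain W n ⥤ C :=
  ObjectProperty.ι _ ⋙ (evaluation (Fin (n + 1)) C).obj 0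

/-- The constant chain functor `C ⥤ Wₙ(C)`. -/
def constWChain (W : MorphismProperty C) [W.ContainsIdentities] (n : ℕ) : C ⥤ WChain W n :=
  ObjectProperty.lift _ (Functor.const (Fin (n + 1)))
    (fun X i j f => by simpa using W.id_mem X)

/-- The natural transformation `evWChain ⋙ constWChain ⟶ 𝟭`. -/
@[simps]
def chainEta (W : MorphismProperty C) [W.ContainsIdentities] (n : ℕ) :
    evWChain W n ⋙ constWChain W n ⟶ 𝟭 (WChain W n) where
  app F := ObjectProperty.homMk (chainHom F.obj)
  naturality F G τ := by
    have h : (Functor.const (Fin (n + 1))).map (NatTrans.app τ.hom 0) ≫ chainHom G.obj =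
        chainHom F.obj ≫ τ.hom := by
      ext i
      simpa [chainHom] using (τ.hom.naturality (homOfLE (Fin.zero_le i))).symm
    exact ObjectProperty.hom_ext _ h

/-- The constant chain functor `D ⥤ Isoₙ(D)`. -/
def constIsoChain (D : Type u') [Category.{v'} D] (n : ℕ) : D ⥤ IsoChain D n :=
  ObjectProperty.lift _ (Functor.const (Fin (n + 1)))
    (fun X i j f => by simpa using inferInstanceAs (IsIso (𝟙 X)))

/-- Evaluation at `0` on `Isoₙ(D)`. -/
def evIsoChain (D : Type u') [Category.{v'} D] (n : ℕ) : IsoChain D n ⥤ D :=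
  ObjectProperty.ι _ ⋙ (evaluation (Fin (n + 1)) D).obj 0

/-- For `F` in `Isoₙ(D)`, the canonical natural transformation `chainHom F.obj` is an
isomorphism, giving an isomorphism in `Isoₙ(D)`. -/
noncomputable def isoChainCounitIso (n : ℕ) (F : IsoChain D n) :
    (constIsoChain D n).obj ((evIsoChain D n).obj F) ≅ F :=
  haveI : ∀ i, IsIso ((chainHom F.obj).app i) := fun i => F.property _ _ _
  haveI := NatIso.isIso_of_isIso_app (chainHom F.obj)
  (ObjectProperty.ι _).preimageIso (by have e := asIso (chainHom F.obj); exact e)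

/-- Any category `D` is equivalent to `Isoₙ(D)` via the constant chain functor. -/
noncomputable def isoChainEquiv (D : Type u') [Category.{v'} D] (n : ℕ) : D ≌ IsoChain D n :=
  CategoryTheory.Equivalence.mk (constIsoChain D n) (evIsoChain D n)
    (NatIso.ofComponents (fun X => Iso.refl X) (by
      intros X Y f
      simp [constIsoChain, evIsoChain]))
    (NatIso.ofComponents (isoChainCounitIso n) (by
      intros F G τ
      apply (ObjectProperty.ι _).map_injective
      simp only [Functor.map_comp, isoChainCounitIso, Functor.preimageIso_hom,
        Functor.map_preimage]
      apply NatTrans.ext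
      funext i
      simpa [evIsoChain, constIsoChain, chainHom, fullSubcategory_preimage_hom] using
        (τ.hom.naturality (homOfLE (Fin.zero_le i))).symm))

end Aux

/-- `γₙ : Wₙ(C) ⥤ Isoₙ(C[W⁻¹])` is a localization of `Wₙ(C)` at `ptWₙ`. -/
theorem gammaN_isLocalization (W : MorphismProperty C)
    [W.ContainsIdentities] [W.IsStableUnderComposition] (n : ℕ)
    {E : Type u'} [Category.{v'} E] (Q : C ⥤ E) [Q.IsLocalization W] :
    (gammaN W n Q).IsLocalization (ptW W n) := by
  -- the localizer morphism given by evaluation at `0`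
  let Φ : LocalizerMorphism (ptW W n) W := ⟨evWChain W n, fun _ _ τ hτ => hτ 0⟩
  -- the constant chain functor inverts `W` after composing with `(ptW W n).Q`
  have hF : W.IsInvertedBy (constWChain W n ⋙ (ptW W n).Q) := by
    intro X Y f hf
    exact Localization.inverts (ptW W n).Q (ptW W n) _ (fun i => hf)
  let F' : E ⥤ (ptW W n).Localization :=
    Localization.lift (constWChain W n ⋙ (ptW W n).Q) hF Q
  let G' : (ptW W n).Localization ⥤ E := Φ.localizedFunctor (ptW W n).Q Q
  haveI : Localization.Lifting (ptW W n).Q (ptW W n) (Φ.functor ⋙ Q) G' :=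
    Φ.liftingLocalizedFunctor _ _
  haveI : Localization.Lifting Q W (constWChain W n ⋙ (ptW W n).Q) F' :=
    Localization.liftingLift _ _ _
  haveI : CatCommSq Φ.functor (ptW W n).Q Q G' := Φ.catCommSq _ _
  -- `chainEta` becomes an isomorphism after applying `(ptW W n).Q`
  haveI : ∀ F, IsIso (((Functor.whiskerRight (chainEta W n) (ptW W n).Q)).app F) := by
    intro F
    exact Localization.inverts (ptW W n).Q (ptW W n) _
      (fun i => F.property 0 i (homOfLE (Fin.zero_le i)))
  haveI := NatIso.isIso_of_isIso_app (Functor.whiskerRight (chainEta W n) (ptW W n).Q)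
  let α : (Φ.functor ⋙ Q) ⋙ F' ≅ (ptW W n).Q :=
    calc (Φ.functor ⋙ Q) ⋙ F' ≅ Φ.functor ⋙ Q ⋙ F' := Functor.associator _ _ _
      _ ≅ Φ.functor ⋙ constWChain W n ⋙ (ptW W n).Q :=
          Functor.isoWhiskerLeft _ (Localization.Lifting.iso Q W _ F')
      _ ≅ (evWChain W n ⋙ constWChain W n) ⋙ (ptW W n).Q := (Functor.associator _ _ _).symm
      _ ≅ 𝟭 _ ⋙ (ptW W n).Q := asIso (Functor.whiskerRight (chainEta W n) (ptW W n).Q)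
      _ ≅ (ptW W n).Q := Functor.leftUnitor _
  let β : (constWChain W n ⋙ (ptW W n).Q) ⋙ G' ≅ Q :=
    calc (constWChain W n ⋙ (ptW W n).Q) ⋙ G'
        ≅ constWChain W n ⋙ (ptW W n).Q ⋙ G' := Functor.associator _ _ _
      _ ≅ constWChain W n ⋙ Φ.functor ⋙ Q :=
          Functor.isoWhiskerLeft _ (Localization.Lifting.iso (ptW W n).Q (ptW W n) _ G')
      _ ≅ (constWChain W n ⋙ Φ.functor) ⋙ Q := (Functor.associator _ _ _).symm
      _ ≅ 𝟭 C ⋙ Q := Functor.isoWhiskerRight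
          (NatIso.ofComponents (fun X => Iso.refl X) (by
            intros X Y f
            simp [constWChain, evWChain, Φ])) Q
      _ ≅ Q := Functor.leftUnitor _
  have hG' : G'.IsEquivalence :=
    Localization.isEquivalence (ptW W n).Q (ptW W n) Q W (Φ.functor ⋙ Q) G'
      (constWChain W n ⋙ (ptW W n).Q) F' α β
  haveI : Φ.IsLocalizedEquivalence :=
    LocalizerMorphism.IsLocalizedEquivalence.mk' Φ (ptW W n).Q Q G'
  haveI : (Φ.functor ⋙ Q).IsLocalization (ptW W n) :=
    LocalizerMorphism.IsLocalizedEquivalence.isLocalization Φ Q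
  refine Functor.IsLocalization.of_equivalence_target (Φ.functor ⋙ Q) (ptW W n) _
    (isoChainEquiv E n) (NatIso.ofComponents
      (fun F => (ObjectProperty.ι _).preimageIso
        (by
          haveI : ∀ i, IsIso ((chainHom (F.obj ⋙ Q)).app i) := by
            intro i
            dsimp [chainHom]
            exact Localization.inverts Q W _ (F.property 0 i (homOfLE (Fin.zero_le i)))
          haveI := NatIso.isIso_of_isIso_app (chainHom (F.obj ⋙ Q))
          have e := asIso (chainHom (F.obj ⋙ Q)); exact e)) ?_)
  intros F G τ
  apply (ObjectProperty.ι _).map_injective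
  simp only [Functor.map_comp, Functor.preimageIso_hom, Functor.map_preimage]
  apply NatTrans.ext
  funext i
  simpa [isoChainEquiv, CategoryTheory.Equivalence.mk, constIsoChain, evWChain, gammaN,
    chainHom, Φ, fullSubcategory_preimage_hom] using ((Functor.whiskerRight τ.hom Q).naturality (homOfLE (Fin.zero_le i))).symm
end

section
/- Let C be a category, W a class of morphisms of C that contains all identities and is stable under composition, and n a natural number. Let Wₙ(C) be the full subcategory of Fun([n], C) on functors sending every morphism of [n] to W, and let ptWₙ be the class of natural transformations between such functors all of whose components lie in W. Let Lₙ : Wₙ(C) ⥤ Wₙ(C)[ptWₙ⁻¹] be a localization of Wₙ(C) at ptWₙ. Then the composite const ⋙ Lₙ : C ⥤ Wₙ(C)[ptWₙ⁻¹], where const sends an object X of C to the constant chain at X, is a localization of C at W. In particular, the localizations C[W⁻¹] and Wₙ(C)[ptWₙ⁻¹] are equivalent. -/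
open CategoryTheory

universe v v' v'' u u' u''

variable {C : Type u} [Category.{v} C]

/-- The constant-chain functor `const : C ⥤ Wₙ(C)`. -/
def constChain (W : MorphismProperty C) [W.ContainsIdentities] (n : ℕ) :
    C ⥤ WChain W n where
  obj X := ⟨(Functor.const (Fin (n + 1))).obj X, fun _ _ _ => W.id_mem X⟩
  map f := ObjectProperty.homMk ((Functor.const (Fin (n + 1))).map f)

/-- Evaluation at `0`, concretely. -/
def evChain (W : MorphismProperty C) (n : ℕ) : WChain W n ⥤ C where
  obj F := F.obj.obj 0
  map τ := τ.hom.app 0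

/-- The natural transformation `const (F 0) ⟶ F`. -/
def epsApp (W : MorphismProperty C) [W.ContainsIdentities] (n : ℕ) (F : WChain W n) :
    (constChain W n).obj ((evChain W n).obj F) ⟶ F := ObjectProperty.homMk {
  app i := F.obj.map (homOfLE (Fin.zero_le i))
  naturality i j f := by
    simp only [constChain, evChain, Functor.const_obj_obj, Functor.const_obj_map,
      Category.id_comp, ← Functor.map_comp]
    congr 1 }

/-- `ε : ev ⋙ const ⟶ 𝟭`, pointwise in `W`. -/
def epsNat (W : MorphismProperty C) [W.ContainsIdentities] (n : ℕ) :
    evChain W n ⋙ constChain W n ⟶ 𝟭 (WChain W n) where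
  app F := epsApp W n F
  naturality F G τ :=
    ObjectProperty.hom_ext _ (NatTrans.ext (funext fun i => (τ.hom.naturality (homOfLE (Fin.zero_le i))).symm))

lemma epsApp_mem (W : MorphismProperty C) [W.ContainsIdentities] (n : ℕ) (F : WChain W n) :
    ptW W n (epsApp W n F) := fun i => F.property _ _ _

/-- `const ⋙ ev = 𝟭` up to iso. -/
def constEv (W : MorphismProperty C) [W.ContainsIdentities] (n : ℕ) :
    constChain W n ⋙ evChain W n ≅ 𝟭 C :=
  NatIso.ofComponents (fun X => Iso.refl _) (by intros; simp [constChain, evChain])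

/-- If `Lₙ : Wₙ(C) ⥤ Wₙ(C)[ptWₙ⁻¹]` is a localization of `Wₙ(C)` at `ptWₙ`, then
`const ⋙ Lₙ` is a localization of `C` at `W`; in particular any localization
`C[W⁻¹]` of `C` at `W` is equivalent to `Wₙ(C)[ptWₙ⁻¹]`. -/
theorem constChain_comp_isLocalization (W : MorphismProperty C)
    [W.ContainsIdentities] [W.IsStableUnderComposition] (n : ℕ)
    {E : Type u'} [Category.{v'} E] (Lₙ : WChain W n ⥤ E)
    [Lₙ.IsLocalization (ptW W n)]
    {E' : Type u''} [Category.{v''} E'] (Q : C ⥤ E') [Q.IsLocalization W] :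
    (constChain W n ⋙ Lₙ).IsLocalization W ∧ Nonempty (E' ≌ E) := by
  -- `const ⋙ Lₙ` inverts `W`
  have hF : W.IsInvertedBy (constChain W n ⋙ Lₙ) := fun X Y f hf =>
    Localization.inverts Lₙ (ptW W n) _ (fun _ => hf)
  -- `ev ⋙ Q` inverts `ptW`
  have hG : (ptW W n).IsInvertedBy (evChain W n ⋙ Q) := fun F G τ hτ =>
    Localization.inverts Q W _ (hτ 0)
  let F : E' ⥤ E := Localization.lift (constChain W n ⋙ Lₙ) hF Q
  let G : E ⥤ E' := Localization.lift (evChain W n ⋙ Q) hG Lₙ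
  let facF : Q ⋙ F ≅ constChain W n ⋙ Lₙ := Localization.fac _ hF Q
  let facG : Lₙ ⋙ G ≅ evChain W n ⋙ Q := Localization.fac _ hG Lₙ
  -- iso `Q ⋙ (F ⋙ G) ≅ Q ⋙ 𝟭`
  have isoFG : Q ⋙ (F ⋙ G) ≅ Q ⋙ 𝟭 E' :=
    (Functor.associator _ _ _).symm ≪≫ Functor.isoWhiskerRight facF G ≪≫
      Functor.associator _ _ _ ≪≫ Functor.isoWhiskerLeft (constChain W n) facG ≪≫
      (Functor.associator _ _ _).symm ≪≫ Functor.isoWhiskerRight (constEv W n) Q ≪≫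
      Q.leftUnitor ≪≫ (Q.rightUnitor).symm
  -- the nat trans `(ev ⋙ const) ⋙ Lₙ ⟶ 𝟭 ⋙ Lₙ` induced by `ε` is an iso
  have : IsIso (Functor.whiskerRight (epsNat W n) Lₙ) := by
    have : ∀ (X : WChain W n), IsIso ((Functor.whiskerRight (epsNat W n) Lₙ).app X) := fun X =>
      Localization.inverts Lₙ (ptW W n) _ (epsApp_mem W n X)
    apply NatIso.isIso_of_isIso_app
  have isoGF : Lₙ ⋙ (G ⋙ F) ≅ Lₙ ⋙ 𝟭 E :=
    (Functor.associator _ _ _).symm ≪≫ Functor.isoWhiskerRight facG F ≪≫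
      Functor.associator _ _ _ ≪≫ Functor.isoWhiskerLeft (evChain W n) facF ≪≫
      (Functor.associator _ _ _).symm ≪≫ asIso (Functor.whiskerRight (epsNat W n) Lₙ) ≪≫
      Lₙ.leftUnitor ≪≫ (Lₙ.rightUnitor).symm
  -- lift these isos through the localizations
  have h1 := Localization.full_whiskeringLeft Q W E'
  have h2 := Localization.faithful_whiskeringLeft Q W E'
  have h3 := Localization.full_whiskeringLeft Lₙ (ptW W n) E
  have h4 := Localization.faithful_whiskeringLeft Lₙ (ptW W n) E
  have eFG : F ⋙ G ≅ 𝟭 E' := ((Functor.whiskeringLeft C E' E').obj Q).preimageIso isoFG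
  have eGF : G ⋙ F ≅ 𝟭 E := ((Functor.whiskeringLeft (WChain W n) E E).obj Lₙ).preimageIso isoGF
  let e : E' ≌ E := CategoryTheory.Equivalence.mk F G eFG.symm eGF
  have : F.IsEquivalence := e.isEquivalence_functor
  constructor
  · exact Functor.IsLocalization.of_equivalence_target Q W _ e facF
  · exact ⟨e⟩
end

section
/- Let C be a category, W a class of morphisms of C that contains all identities and is stable under composition, Q : C ⥤ C[W⁻¹] a localization of C at W, and n a natural number. Then for every functor G : [n] ⥤ C[W⁻¹] sending every morphism of [n] to an isomorphism, there exists a functor F : [n] ⥤ C sending every morphism of [n] to a morphism in W, together with a natural isomorphism F ⋙ Q ≅ G. -/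
open CategoryTheory

universe v v' u u'

variable {C : Type u} [Category.{v} C]

/-- Every chain of isomorphisms in the localization `C[W⁻¹]` indexed by
`[n] = {0 < 1 < ... < n}` lifts, up to natural isomorphism, to a chain of morphisms
of `W` in `C`. -/
theorem exists_lift_of_isoChain (W : MorphismProperty C)
    [W.ContainsIdentities] [W.IsStableUnderComposition]
    {E : Type u'} [Category.{v'} E] (Q : C ⥤ E) [Q.IsLocalization W] (n : ℕ)
    (G : Fin (n + 1) ⥤ E)
    (hG : ∀ (i j : Fin (n + 1)) (f : i ⟶ j), IsIso (G.map f)) :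
    ∃ F : Fin (n + 1) ⥤ C,
      (∀ (i j : Fin (n + 1)) (f : i ⟶ j), W (F.map f)) ∧ Nonempty (F ⋙ Q ≅ G) := by
  have : Q.EssSurj := Localization.essSurj Q W
  refine ⟨(Functor.const _).obj (Q.objPreimage (G.obj 0)), fun i j f => ?_, ⟨?_⟩⟩
  · simpa using W.id_mem _
  · exact NatIso.ofComponents
      (fun i => Q.objObjPreimageIso (G.obj 0) ≪≫
        @asIso _ _ _ _ (G.map (homOfLE i.zero_le)) (hG _ _ _))
      (fun {i j} f => by
        have : homOfLE i.zero_le ≫ f = homOfLE j.zero_le := rfl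
        dsimp
        rw [Category.assoc, ← G.map_comp, this]
        simp)
end
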